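/- Let X be a real n×q matrix, y ∈ ℝⁿ, and λ ≥ 0. If β̂ ∈ ℝ^q is a minimizer of the lasso objective β ↦ (1/2)‖y − Xβ‖₂² + λ‖β‖₁ over ℝ^q, then ‖Xᵀ(y − Xβ̂)‖_{ℓ∞} ≤ λ; that is, every lasso solution is feasible for the Dantzig selector constraint set with the same parameter λ. -/

import Mathlib

open Matrix

/-
If some coordinate `j` of the correlated residual `Xᵀ(y - Xβ̂)` exceeded `λ` in absolute value,
moving `β̂` a little along `e_j` would decrease the squared loss at first order by more than it
increases the penalty, contradicting minimality.
-/

theorem le_of_forall_pos_mul_le {A c lam : ℝ} (hA : 0 ≤ A)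
    (h : ∀ t : ℝ, 0 < t → t * c ≤ A * t ^ 2 + lam * t) : c ≤ lam := by
  refine le_of_forall_pos_le_add fun ε hε => ?_
  set t := ε / (A + 1)
  have ht : 0 < t := by positivity
  have hc : c ≤ A * t + lam := le_of_mul_le_mul_left (by linarith [h t ht]) ht
  have hAt : A * t ≤ ε := by
    calc A * t ≤ (A + 1) * t := by nlinarith
      _ = ε := mul_div_cancel₀ ε (by positivity)
  linarith

theorem abs_le_of_forall_mul_le {A c lam : ℝ} (hA : 0 ≤ A)
    (h : ∀ t : ℝ, t * c ≤ A * t ^ 2 + lam * |t|) : |c| ≤ lam := by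
  refine abs_le'.mpr ⟨le_of_forall_pos_mul_le hA fun t ht => ?_,
    le_of_forall_pos_mul_le hA fun t ht => ?_⟩
  · simpa [abs_of_pos ht] using h t
  · simpa [abs_of_pos ht] using h (-t)

section CoordinatePerturbation

variable {m n : Type*} [Fintype m] [Fintype n] [DecidableEq n]

theorem sum_sq_sub_mulVec_add_single (X : Matrix m n ℝ) (y : m → ℝ) (β : n → ℝ) (j : n)
    (t : ℝ) :
    ∑ i, (y i - (X *ᵥ (β + Pi.single j t)) i) ^ 2 =
      ∑ i, (y i - (X *ᵥ β) i) ^ 2 - 2 * t * (Xᵀ *ᵥ (y - X *ᵥ β)) j +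
        t ^ 2 * ∑ i, X i j ^ 2 := by
  have hcol : ∀ i, (X *ᵥ (β + Pi.single j t)) i = (X *ᵥ β) i + t * X i j := fun i => by
    simp [mulVec_add, mulVec_single]
  have hcorr : (Xᵀ *ᵥ (y - X *ᵥ β)) j = ∑ i, X i j * (y i - (X *ᵥ β) i) := by
    simp [mulVec, dotProduct]
  simp only [hcol, hcorr, Finset.mul_sum, ← Finset.sum_sub_distrib, ← Finset.sum_add_distrib]
  exact Finset.sum_congr rfl fun i _ => by ring

theorem sum_abs_add_single_le (β : n → ℝ) (j : n) (t : ℝ) :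
    ∑ k, |(β + Pi.single j t : n → ℝ) k| ≤ ∑ k, |β k| + |t| := by
  calc ∑ k, |(β + Pi.single j t : n → ℝ) k|
      ≤ ∑ k, (|β k| + (Pi.single j |t| : n → ℝ) k) :=
        Finset.sum_le_sum fun k _ => by
          simpa [Pi.single_apply, apply_ite] using abs_add_le (β k) ((Pi.single j t : n → ℝ) k)
    _ = ∑ k, |β k| + |t| := by simp [Finset.sum_add_distrib]

end CoordinatePerturbation

/-- Every lasso solution is feasible for the Dantzig selector constraint set with
the same parameter: if `β̂` minimizes `(1/2)‖y - Xβ‖₂² + λ‖β‖₁`, then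
`‖Xᵀ(y - Xβ̂)‖_{ℓ∞} ≤ λ`. -/
theorem lasso_solution_mem_dantzig_constraint
    (n q : ℕ) (X : Matrix (Fin n) (Fin q) ℝ) (y : Fin n → ℝ)
    (lam : ℝ) (hlam : 0 ≤ lam) (βhat : Fin q → ℝ)
    (hmin : ∀ β : Fin q → ℝ,
      (1 / 2) * (∑ i, (y i - X.mulVec βhat i) ^ 2) + lam * ∑ j, |βhat j| ≤
      (1 / 2) * (∑ i, (y i - X.mulVec β i) ^ 2) + lam * ∑ j, |β j|) :
    ∀ j, |Xᵀ.mulVec (y - X.mulVec βhat) j| ≤ lam := by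
  intro j
  refine abs_le_of_forall_mul_le (A := (1 / 2) * ∑ i, X i j ^ 2) (by positivity) fun t => ?_
  have hloss := hmin (βhat + Pi.single j t)
  rw [sum_sq_sub_mulVec_add_single] at hloss
  have hpenalty := mul_le_mul_of_nonneg_left (sum_abs_add_single_le βhat j t) hlam
  linarith
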